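/- For each real m ≥ 0 and reals x, t with |x| < t: lim_{n→∞} n·a1( (2/n)·⌊nx/2⌋, (2/n)·⌊nt/2⌋, m, 1/n ) = m·J0(m·√(t²−x²)) and lim_{n→∞} n·a2( (2/n)·⌊nx/2⌋, (2/n)·⌊nt/2⌋, m, 1/n ) = −m·((x+t)/√(t²−x²))·J1(m·√(t²−x²)), where J0 and J1 are the Bessel functions of the first kind. -/

import Mathlib

open scoped BigOperators

noncomputable section

/-- Endpoint `x`-coordinate of a checker path of `n` steps encoded by step directions:
`true` = step `(1,1)`, `false` = step `(-1,1)`. -/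
def endpt {n : ℕ} (d : Fin n → Bool) : ℤ :=
  ∑ i, (if d i then (1 : ℤ) else -1)

/-- The number of turns of a checker path encoded by step directions. -/
def turns {n : ℕ} (d : Fin n → Bool) : ℕ :=
  ((Finset.range n).filter fun i =>
    ∃ h : i + 1 < n, d ⟨i, Nat.lt_of_succ_lt h⟩ ≠ d ⟨i + 1, h⟩).card

/-- Checker paths from `(0,0)` to `(x,n)` with the first step to `(1,1)`,
encoded by their step directions. -/
def pathsTo (x : ℤ) (n : ℕ) : Finset (Fin n → Bool) :=
  Finset.univ.filter fun d => (∃ h : 0 < n, d ⟨0, h⟩ = true) ∧ endpt d = x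

/-- Feynman checkers with mass `m` and lattice step `ε`: the value `a(εx, εt, m, ε)`,
where `x t : ℤ` are the coordinates in units of `ε`. -/
def am (x t : ℤ) (m ε : ℝ) : ℂ :=
  (1 + m ^ 2 * ε ^ 2 : ℂ) ^ ((1 - (t : ℂ)) / 2) * Complex.I *
    ∑ d ∈ pathsTo x t.toNat, (-Complex.I * (m * ε)) ^ turns d

/-- The basic model: `a(x,t)`. -/
def a (x t : ℤ) : ℂ :=
  (2 : ℂ) ^ ((1 - (t : ℂ)) / 2) * Complex.I *
    ∑ d ∈ pathsTo x t.toNat, (-Complex.I) ^ turns d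

/-- Bessel function of the first kind J₀. -/
def besselJ0 (z : ℝ) : ℝ := ∑' k : ℕ, (-1 : ℝ) ^ k * (z / 2) ^ (2 * k) / (Nat.factorial k : ℝ) ^ 2

/-- Bessel function of the first kind J₁. -/
def besselJ1 (z : ℝ) : ℝ :=
  ∑' k : ℕ, (-1 : ℝ) ^ k * (z / 2) ^ (2 * k + 1) /
    ((Nat.factorial k : ℝ) * (Nat.factorial (k + 1) : ℝ))

/-!
A path to `(A - B, A + B + 2)` whose first step goes up has `A + 1` up-steps and `B + 1`
down-steps. With `2k + 1` turns it consists of `k + 1` up-runs and `k + 1` down-runs, with `2k + 2`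
turns of `k + 2` up-runs and `k + 1` down-runs, so counting compositions gives
`∑ z ^ turns = ∑ₖ (z ^ (2k+1) C(A,k) C(B,k) + z ^ (2k+2) C(A,k+1) C(B,k))`.
For `z = -i m / n` the odd and even terms are the real and imaginary parts of `n · a`, namely
series in `(-m²)ᵏ C(A,k+p)/n^(k+p) · C(B,k)/nᵏ` (`p = 0, 1`). When `A/n → u` and `B/n → v` every
term tends to `(-m²)ᵏ u^(k+p)/(k+p)! · vᵏ/k!`, and `C(N,k)/nᵏ ≤ (N/n)ᵏ/k!` gives a summable
dominating sequence, so the limit passes through the series (Tannery's theorem); the limits are the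
power series of `J₀` and `J₁`. The prefactor `(1 + m²/n²)^(-O(n))` tends to `1`.
-/

open Finset Filter Topology
open scoped Nat

/-! ### Turns of checker paths -/

lemma endpt_snoc {n : ℕ} (e : Fin n → Bool) (b : Bool) :
    endpt (Fin.snoc e b : Fin (n + 1) → Bool) = endpt e + if b then 1 else -1 := by
  simp [endpt, Fin.sum_univ_castSucc]

lemma abs_endpt_le {n : ℕ} (d : Fin n → Bool) : |endpt d| ≤ n := by
  calc |endpt d| ≤ ∑ i, |if d i then (1 : ℤ) else -1| := abs_sum_le_sum_abs _ _
    _ = n := by simp [apply_ite]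

lemma turns_snoc {n : ℕ} (e : Fin (n + 1) → Bool) (b : Bool) :
    turns (Fin.snoc e b : Fin (n + 2) → Bool) = turns e + if e (Fin.last n) = b then 0 else 1 := by
  have hcast : ∀ i (h : i < n + 1), (Fin.snoc e b : Fin (n + 2) → Bool) ⟨i, by omega⟩ = e ⟨i, h⟩ :=
    fun i h => Fin.snoc_castSucc (α := fun _ => Bool) (i := ⟨i, h⟩) ..
  have hlast : (Fin.snoc e b : Fin (n + 2) → Bool) ⟨n + 1, by omega⟩ = b :=
    Fin.snoc_last (α := fun _ => Bool) ..
  have hinner : ∀ i ∈ range n,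
      (if ∃ h : i + 1 < n + 2, (Fin.snoc e b : Fin (n + 2) → Bool) ⟨i, by omega⟩ ≠
          (Fin.snoc e b : Fin (n + 2) → Bool) ⟨i + 1, h⟩ then 1 else 0) =
        if ∃ h : i + 1 < n + 1, e ⟨i, by omega⟩ ≠ e ⟨i + 1, h⟩ then 1 else 0 := by
    intro i hi
    have := mem_range.1 hi
    simp [hcast i (by omega), hcast (i + 1) (by omega), show i + 1 < n + 2 by omega,
      show i + 1 < n + 1 by omega]
  simp only [turns, card_filter, sum_range_succ]
  rw [sum_congr rfl hinner]
  simp [Fin.last, hcast, hlast]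

lemma mem_pathsTo_succ {x : ℤ} {n : ℕ} {d : Fin (n + 1) → Bool} :
    d ∈ pathsTo x (n + 1) ↔ d 0 = true ∧ endpt d = x := by
  simp [pathsTo, Fin.zero_eta]

def lastStepSum (z : ℂ) (n : ℕ) (x : ℤ) (b : Bool) : ℂ :=
  ∑ d ∈ (pathsTo x (n + 1)).filter (· (Fin.last n) = b), z ^ turns d

lemma sum_pathsTo_eq_lastStepSum_add (z : ℂ) (n : ℕ) (x : ℤ) :
    ∑ d ∈ pathsTo x (n + 1), z ^ turns d = lastStepSum z n x true + lastStepSum z n x false := by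
  rw [← sum_filter_add_sum_filter_not _ (· (Fin.last n) = true)]
  simp [lastStepSum]

lemma lastStepSum_zero (z : ℂ) (x : ℤ) (b : Bool) :
    lastStepSum z 0 x b = if x = 1 ∧ b = true then 1 else 0 := by
  have hpaths : (pathsTo x 1).filter (· (Fin.last 0) = b) =
      if x = 1 ∧ b = true then {fun _ => true} else ∅ := by
    ext d
    simp only [mem_filter, mem_pathsTo_succ, endpt, Fin.last, Fin.isValue]
    split_ifs with h
    · simp [funext_iff, Fin.forall_fin_one, h]
    · simp only [notMem_empty, iff_false]
      rintro ⟨⟨h0, hx⟩, rfl⟩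
      rw [Fin.sum_univ_one, if_pos h0] at hx
      exact h ⟨hx.symm, h0⟩
  rw [lastStepSum, hpaths]
  split_ifs <;> simp [turns]

lemma lastStepSum_eq_zero {z : ℂ} {n : ℕ} {x : ℤ} (b : Bool) (hx : (n : ℤ) + 1 < |x|) :
    lastStepSum z n x b = 0 := by
  refine sum_eq_zero fun d hd => absurd ?_ hx.not_ge
  obtain ⟨-, rfl⟩ := mem_pathsTo_succ.1 (mem_filter.1 hd).1
  exact_mod_cast abs_endpt_le d

lemma lastStepSum_succ (z : ℂ) (n : ℕ) (x : ℤ) (b : Bool) :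
    lastStepSum z (n + 1) x b = lastStepSum z n (x - if b then 1 else -1) b +
      z * lastStepSum z n (x - if b then 1 else -1) (!b) := by
  have hsnoc : lastStepSum z (n + 1) x b = ∑ e ∈ pathsTo (x - if b then 1 else -1) (n + 1),
      z ^ turns (Fin.snoc e b : Fin (n + 2) → Bool) := by
    refine (sum_nbij' (fun e => (Fin.snoc e b : Fin (n + 2) → Bool)) Fin.init (fun e he => ?_)
      (fun d hd => ?_) (fun e _ => Fin.init_snoc (α := fun _ => Bool) ..) (fun d hd => ?_)
      fun _ _ => rfl).symm
    · obtain ⟨h0, hx⟩ := mem_pathsTo_succ.1 he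
      simp only [mem_filter, mem_pathsTo_succ, endpt_snoc, hx, Fin.snoc_last]
      exact ⟨⟨(Fin.snoc_castSucc (α := fun _ => Bool) (i := 0) ..).trans h0, by ring⟩, trivial⟩
    · obtain ⟨hmem, rfl⟩ := mem_filter.1 hd
      obtain ⟨h0, rfl⟩ := mem_pathsTo_succ.1 hmem
      refine mem_pathsTo_succ.2 ⟨h0, ?_⟩
      have := endpt_snoc (Fin.init d) (d (Fin.last _))
      rw [Fin.snoc_init_self] at this
      omega
    · obtain ⟨-, rfl⟩ := mem_filter.1 hd
      exact Fin.snoc_init_self d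
  rw [hsnoc, lastStepSum, lastStepSum, mul_sum,
    ← sum_filter_add_sum_filter_not _ (· (Fin.last n) = b)]
  congr 1
  · refine sum_congr rfl fun e he => ?_
    simp [turns_snoc, (mem_filter.1 he).2]
  · refine sum_congr (filter_congr fun e _ => by cases b <;> simp) fun e he => ?_
    simp [turns_snoc, (mem_filter.1 he).2, pow_succ, mul_comm]

def compositionCount : ℕ → ℕ → ℕ
  | 0, 0 => 1
  | 0, _ + 1 => 0
  | _ + 1, 0 => 0
  | M + 1, j + 1 => M.choose j

@[simp] lemma compositionCount_zero_zero : compositionCount 0 0 = 1 := rfl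
@[simp] lemma compositionCount_zero_succ (j : ℕ) : compositionCount 0 (j + 1) = 0 := rfl
@[simp] lemma compositionCount_succ_zero (M : ℕ) : compositionCount (M + 1) 0 = 0 := rfl
@[simp] lemma compositionCount_succ_succ (M j : ℕ) :
    compositionCount (M + 1) (j + 1) = M.choose j := rfl

lemma compositionCount_eq_zero_of_lt {M j : ℕ} (h : M < j) : compositionCount M j = 0 := by
  match M, j with
  | 0, _ + 1 => rfl
  | _ + 1, _ + 1 => exact Nat.choose_eq_zero_of_lt (by omega)

lemma compositionCount_succ_succ_eq_add (M j : ℕ) :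
    compositionCount (M + 1) (j + 1) = compositionCount M j + compositionCount M (j + 1) := by
  match M, j with
  | 0, 0 => rfl
  | 0, _ + 1 => simp
  | _ + 1, 0 => simp
  | _ + 1, _ + 1 => simp [Nat.choose_succ_succ]

def turnSumUp (z : ℂ) (P Q : ℕ) : ℂ :=
  ∑ k ∈ range (Q + 1), z ^ (2 * k) * compositionCount P (k + 1) * compositionCount Q k

def turnSumDown (z : ℂ) (P Q : ℕ) : ℂ :=
  ∑ k ∈ range (Q + 1), z ^ (2 * k + 1) * compositionCount P (k + 1) * compositionCount Q (k + 1)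

lemma turnSumUp_succ_left (z : ℂ) {P Q : ℕ} (h : P + Q ≠ 0) :
    turnSumUp z (P + 1) Q = turnSumUp z P Q + z * turnSumDown z P Q := by
  have hshift : ∑ k ∈ range (Q + 1), z ^ (2 * k) * compositionCount P k * compositionCount Q k =
      z * turnSumDown z P Q := by
    have h0 : (compositionCount P 0 : ℂ) * compositionCount Q 0 = 0 := by
      rcases P with _ | P <;> rcases Q with _ | Q <;> simp_all
    rw [turnSumDown, mul_sum, sum_range_succ', sum_range_succ,
      mul_assoc _ (compositionCount P 0 : ℂ), h0,
      compositionCount_eq_zero_of_lt (Nat.lt_succ_self Q)]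
    simp only [Nat.cast_zero, mul_zero, add_zero]
    exact sum_congr rfl fun k _ => by ring
  simp only [turnSumUp, ← hshift, ← sum_add_distrib, compositionCount_succ_succ_eq_add]
  exact sum_congr rfl fun k _ => by push_cast; ring

lemma turnSumDown_succ_right (z : ℂ) (P Q : ℕ) :
    turnSumDown z P (Q + 1) = z * turnSumUp z P Q + turnSumDown z P Q := by
  rw [turnSumDown, sum_range_succ, compositionCount_succ_succ,
    Nat.choose_eq_zero_of_lt (Nat.lt_succ_self Q), Nat.cast_zero, mul_zero, add_zero,
    turnSumUp, turnSumDown, mul_sum, ← sum_add_distrib]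
  exact sum_congr rfl fun k _ => by rw [compositionCount_succ_succ_eq_add]; push_cast; ring

@[simp] lemma turnSumUp_zero_left (z : ℂ) (Q : ℕ) : turnSumUp z 0 Q = 0 := by
  simp [turnSumUp]

@[simp] lemma turnSumDown_zero_right (z : ℂ) (P : ℕ) : turnSumDown z P 0 = 0 := by
  simp [turnSumDown]

theorem lastStepSum_eq_turnSum (z : ℂ) (n : ℕ) : ∀ P Q : ℕ, P + Q = n + 1 →
    lastStepSum z n (P - Q) true = turnSumUp z P Q ∧
      lastStepSum z n (P - Q) false = turnSumDown z P Q := by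
  induction n with
  | zero =>
    rintro (_ | _ | P) (_ | _ | Q) h <;> try omega
    all_goals simp [lastStepSum_zero, turnSumUp, turnSumDown]
  | succ n ih =>
    intro P Q h
    have hfar (x : ℤ) (hx : (n : ℤ) + 1 < |x|) (b : Bool) := lastStepSum_eq_zero (z := z) b hx
    constructor
    · rw [lastStepSum_succ, if_pos rfl, Bool.not_true]
      rcases P with _ | P
      · rw [hfar, hfar, turnSumUp_zero_left, mul_zero, add_zero] <;>
          (rw [abs_of_neg (by omega)]; omega)
      · rw [show ((P + 1 : ℕ) : ℤ) - Q - 1 = P - Q by push_cast; ring, (ih P Q (by omega)).1,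
          (ih P Q (by omega)).2, turnSumUp_succ_left z (by omega)]
    · rw [lastStepSum_succ, if_neg Bool.false_ne_true, Bool.not_false]
      rcases Q with _ | Q
      · rw [hfar, hfar, turnSumDown_zero_right, mul_zero, add_zero] <;>
          (rw [abs_of_pos (by omega)]; omega)
      · rw [show (P : ℤ) - (Q + 1 : ℕ) - -1 = P - Q by push_cast; ring, (ih P Q (by omega)).1,
          (ih P Q (by omega)).2, turnSumDown_succ_right, add_comm]

theorem sum_pathsTo_sub_add_two (z : ℂ) (A B : ℕ) :
    ∑ d ∈ pathsTo ((A : ℤ) - B) (A + B + 2), z ^ turns d =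
      ∑ k ∈ range (B + 1), (z ^ (2 * k + 1) * A.choose k * B.choose k +
        z ^ (2 * k + 2) * A.choose (k + 1) * B.choose k) := by
  obtain ⟨hup, hdown⟩ := lastStepSum_eq_turnSum z (A + B + 1) (A + 1) (B + 1) (by omega)
  push_cast at hup hdown
  rw [add_sub_add_right_eq_sub] at hup hdown
  rw [sum_pathsTo_eq_lastStepSum_add, hup, hdown, turnSumUp, turnSumDown, sum_range_succ',
    sum_range_succ _ (B + 1)]
  simp only [compositionCount_succ_succ, compositionCount_succ_zero, Nat.choose_succ_self,
    Nat.cast_zero, mul_zero, add_zero, ← sum_add_distrib]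
  exact sum_congr rfl fun k _ => by ring

/-! ### The amplitude as a binomial series -/

def chooseSeries (c : ℝ) (p A B n : ℕ) : ℝ :=
  ∑' k, c ^ k * ((A.choose (k + p) : ℝ) / (n : ℝ) ^ (k + p)) * ((B.choose k : ℝ) / (n : ℝ) ^ k)

def besselSeries (c : ℝ) (p : ℕ) (u v : ℝ) : ℝ :=
  ∑' k, c ^ k * (u ^ (k + p) / (k + p)!) * (v ^ k / k !)

lemma chooseSeries_eq_sum (c : ℝ) (p A B n : ℕ) :
    chooseSeries c p A B n = ∑ k ∈ range (B + 1),
      c ^ k * ((A.choose (k + p) : ℝ) / (n : ℝ) ^ (k + p)) * ((B.choose k : ℝ) / (n : ℝ) ^ k) :=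
  tsum_eq_sum fun k hk => by
    rw [Nat.choose_eq_zero_of_lt (by simpa using hk : B < k)]; simp

lemma natCast_mul_am (m : ℝ) (A B n : ℕ) (hn : n ≠ 0) :
    (n : ℂ) * am ((A : ℤ) - B) ((A : ℤ) + B + 2) m (1 / n) =
      ((1 + m ^ 2 / (n : ℝ) ^ 2) ^ (-(A + B + 1 : ℝ) / 2) : ℝ) *
        (((m * chooseSeries (-m ^ 2) 0 A B n : ℝ) : ℂ) +
          ((-m ^ 2 * chooseSeries (-m ^ 2) 1 A B n : ℝ) : ℂ) * Complex.I) := by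
  have htoNat : ((A : ℤ) + B + 2).toNat = A + B + 2 := by omega
  have hpref : (1 + m ^ 2 * (1 / n : ℝ) ^ 2 : ℂ) ^ ((1 - (((A : ℤ) + B + 2 : ℤ) : ℂ)) / 2) =
      (((1 + m ^ 2 / (n : ℝ) ^ 2) ^ (-(A + B + 1 : ℝ) / 2) : ℝ) : ℂ) := by
    rw [Complex.ofReal_cpow (by positivity)]
    push_cast
    ring_nf
  have hn' : (n : ℂ) ≠ 0 := by exact_mod_cast hn
  have hz : (-Complex.I * (m * (1 / n))) ^ 2 = -m ^ 2 / n ^ 2 := by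
    field_simp
    rw [Complex.I_sq]
    ring
  rw [am, htoNat, sum_pathsTo_sub_add_two, hpref, chooseSeries_eq_sum, chooseSeries_eq_sum]
  generalize ((1 + m ^ 2 / (n : ℝ) ^ 2) ^ (-(A + B + 1 : ℝ) / 2) : ℝ) = r
  push_cast
  simp only [mul_sum, sum_mul, ← sum_add_distrib]
  refine sum_congr rfl fun k _ => ?_
  rw [pow_succ, pow_mul, show 2 * k + 2 = 2 * (k + 1) by ring, pow_mul, hz, div_pow, div_pow,
    ← pow_mul]
  field_simp
  ring_nf
  rw [Complex.I_sq]
  ring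

lemma natCast_mul_am_re_im (m : ℝ) (A B n : ℕ) (hn : n ≠ 0) :
    (n : ℝ) * (am ((A : ℤ) - B) ((A : ℤ) + B + 2) m (1 / n)).re =
        (1 + m ^ 2 / (n : ℝ) ^ 2) ^ (-(A + B + 1 : ℝ) / 2) * (m * chooseSeries (-m ^ 2) 0 A B n) ∧
      (n : ℝ) * (am ((A : ℤ) - B) ((A : ℤ) + B + 2) m (1 / n)).im =
        (1 + m ^ 2 / (n : ℝ) ^ 2) ^ (-(A + B + 1 : ℝ) / 2) *
          (-m ^ 2 * chooseSeries (-m ^ 2) 1 A B n) := by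
  have h := natCast_mul_am m A B n hn
  rw [← Complex.ofReal_natCast] at h
  constructor
  · simpa only [Complex.re_ofReal_mul, Complex.add_re, Complex.ofReal_re, Complex.mul_I_re,
      Complex.ofReal_im, neg_zero, add_zero] using congrArg Complex.re h
  · simpa only [Complex.im_ofReal_mul, Complex.add_im, Complex.ofReal_im, Complex.mul_I_im,
      Complex.ofReal_re, zero_add] using congrArg Complex.im h

/-! ### Continuum limit of the binomial series -/

lemma natCast_choose_mul_factorial (N k : ℕ) :
    (N.choose k : ℝ) * k ! = ∏ i ∈ range k, ((N : ℝ) - i) := by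
  rw [← Nat.cast_mul, mul_comm, ← Nat.descFactorial_eq_factorial_mul_choose,
    ← descPochhammer_eval_eq_descFactorial, descPochhammer_eval_eq_prod_range]

lemma tendsto_choose_div_pow {M : ℕ → ℕ} {u : ℝ}
    (hM : Tendsto (fun n => (M n : ℝ) / n) atTop (𝓝 u)) (k : ℕ) :
    Tendsto (fun n => ((M n).choose k : ℝ) / (n : ℝ) ^ k) atTop (𝓝 (u ^ k / k !)) := by
  have hprod : Tendsto (fun n : ℕ => ∏ i ∈ range k, ((M n : ℝ) / n - i / n)) atTop (𝓝 (u ^ k)) := by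
    simpa using tendsto_finsetProd (range k) fun i _ =>
      hM.sub (tendsto_const_div_atTop_nhds_zero_nat (i : ℝ))
  refine (hprod.div_const _).congr' ?_
  filter_upwards [eventually_ne_atTop 0] with n hn
  simp_rw [← sub_div, prod_div_distrib, prod_const, card_range, ← natCast_choose_mul_factorial]
  field_simp

lemma natCast_choose_div_pow_le {N n : ℕ} {w : ℝ} (h : (N : ℝ) / n ≤ w) (k : ℕ) :
    (N.choose k : ℝ) / (n : ℝ) ^ k ≤ w ^ k / k ! := by
  calc (N.choose k : ℝ) / (n : ℝ) ^ k ≤ ((N : ℝ) ^ k / k !) / (n : ℝ) ^ k := by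
        gcongr; exact Nat.choose_le_pow_div k N
    _ = ((N : ℝ) / n) ^ k / k ! := by rw [div_pow]; ring
    _ ≤ w ^ k / k ! := by gcongr

theorem tendsto_chooseSeries {A B : ℕ → ℕ} {u v : ℝ} (c : ℝ) (p : ℕ)
    (hA : Tendsto (fun n => (A n : ℝ) / n) atTop (𝓝 u))
    (hB : Tendsto (fun n => (B n : ℝ) / n) atTop (𝓝 v)) :
    Tendsto (fun n => chooseSeries c p (A n) (B n) n) atTop (𝓝 (besselSeries c p u v)) := by
  have hu : 0 ≤ u := ge_of_tendsto' hA fun n => by positivity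
  have hv : 0 ≤ v := ge_of_tendsto' hB fun n => by positivity
  have hA' : ∀ᶠ n in atTop, (A n : ℝ) / n ≤ u + 1 :=
    hA.eventually (eventually_le_nhds (by linarith))
  have hB' : ∀ᶠ n in atTop, (B n : ℝ) / n ≤ v + 1 :=
    hB.eventually (eventually_le_nhds (by linarith))
  refine tendsto_tsum_of_dominated_convergence
    (bound := fun k => (u + 1) ^ p * ((|c| * (u + 1) * (v + 1)) ^ k / k !))
    ((Real.summable_pow_div_factorial _).mul_left _)
    (fun k => ((tendsto_choose_div_pow hA _).const_mul _).mul (tendsto_choose_div_pow hB _)) ?_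
  filter_upwards [hA', hB'] with n hAn hBn k
  have hfact : (u + 1) ^ (k + p) / ((k + p)! : ℝ) ≤ (u + 1) ^ (k + p) :=
    div_le_self (by positivity) (by exact_mod_cast (k + p).factorial_pos)
  calc ‖c ^ k * ((A n).choose (k + p) / (n : ℝ) ^ (k + p)) * ((B n).choose k / (n : ℝ) ^ k)‖
      = |c| ^ k * ((A n).choose (k + p) / (n : ℝ) ^ (k + p)) * ((B n).choose k / (n : ℝ) ^ k) := by
        simp only [norm_mul, norm_pow, norm_div, Real.norm_eq_abs, Nat.abs_cast]
    _ ≤ |c| ^ k * ((u + 1) ^ (k + p)) * ((v + 1) ^ k / k !) := by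
        gcongr |c| ^ k * ?_ * ?_
        · exact (natCast_choose_div_pow_le hAn _).trans hfact
        · exact natCast_choose_div_pow_le hBn _
    _ = (u + 1) ^ p * ((|c| * (u + 1) * (v + 1)) ^ k / k !) := by
        rw [mul_pow, mul_pow, pow_add]; ring

lemma besselJ0_eq_besselSeries {z c u v : ℝ} (h : (z / 2) ^ 2 = -c * u * v) :
    besselJ0 z = besselSeries c 0 u v := by
  refine tsum_congr fun k => ?_
  have hk : (-1 : ℝ) ^ k * (-c * u * v) ^ k = c ^ k * u ^ k * v ^ k := by rw [← mul_pow]; ring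
  rw [pow_mul, h, add_zero]
  linear_combination hk / (k ! : ℝ) ^ 2

lemma mul_besselJ1_eq_besselSeries {z c u v : ℝ} (h : (z / 2) ^ 2 = -c * u * v) :
    u * besselJ1 z = z / 2 * besselSeries c 1 u v := by
  rw [besselJ1, besselSeries, ← tsum_mul_left, ← tsum_mul_left]
  refine tsum_congr fun k => ?_
  have hk : (-1 : ℝ) ^ k * (-c * u * v) ^ k = c ^ k * u ^ k * v ^ k := by rw [← mul_pow]; ring
  rw [pow_succ, pow_mul, h]
  linear_combination u * (z / 2) / (k ! * (k + 1)! : ℝ) * hk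

lemma tendsto_one_add_sq_div_sq_rpow (m : ℝ) {e : ℕ → ℝ} {L : ℝ}
    (he : Tendsto (fun n => e n / n) atTop (𝓝 L)) :
    Tendsto (fun n : ℕ => (1 + m ^ 2 / (n : ℝ) ^ 2) ^ e n) atTop (𝓝 1) := by
  have hsmall : Tendsto (fun n : ℕ => m ^ 2 / n * (e n / n)) atTop (𝓝 0) := by
    simpa using (tendsto_const_div_atTop_nhds_zero_nat (m ^ 2)).mul he
  have hlog : Tendsto (fun n : ℕ => Real.log (1 + m ^ 2 / (n : ℝ) ^ 2) * e n) atTop (𝓝 0) := by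
    refine squeeze_zero_norm (fun n => ?_) (tendsto_norm_zero.comp hsmall)
    have hy : 0 ≤ m ^ 2 / (n : ℝ) ^ 2 := by positivity
    have hlog0 := Real.log_nonneg (le_add_of_nonneg_right hy)
    have hlog1 : Real.log (1 + m ^ 2 / (n : ℝ) ^ 2) ≤ m ^ 2 / (n : ℝ) ^ 2 := by
      linarith [Real.log_le_sub_one_of_pos (by positivity : 0 < 1 + m ^ 2 / (n : ℝ) ^ 2)]
    calc ‖Real.log (1 + m ^ 2 / (n : ℝ) ^ 2) * e n‖ ≤ m ^ 2 / (n : ℝ) ^ 2 * |e n| := by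
          rw [Real.norm_eq_abs, abs_mul, abs_of_nonneg hlog0]; gcongr
      _ = ‖m ^ 2 / n * (e n / n)‖ := by
          rw [Real.norm_eq_abs, abs_mul, abs_div, abs_div, abs_of_nonneg (sq_nonneg m),
            Nat.abs_cast]
          ring
  have hexp := (Real.continuous_exp.tendsto 0).comp hlog
  rw [Real.exp_zero] at hexp
  refine hexp.congr fun n => ?_
  rw [Real.rpow_def_of_pos (by positivity)]
  rfl

theorem tendsto_natCast_mul_am {A B : ℕ → ℕ} {u v : ℝ} (m : ℝ)
    (hA : Tendsto (fun n => (A n : ℝ) / n) atTop (𝓝 u))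
    (hB : Tendsto (fun n => (B n : ℝ) / n) atTop (𝓝 v)) :
    Tendsto (fun n : ℕ => (n : ℝ) * (am ((A n : ℤ) - B n) ((A n : ℤ) + B n + 2) m (1 / n)).re)
        atTop (𝓝 (m * besselSeries (-m ^ 2) 0 u v)) ∧
      Tendsto (fun n : ℕ => (n : ℝ) * (am ((A n : ℤ) - B n) ((A n : ℤ) + B n + 2) m (1 / n)).im)
        atTop (𝓝 (-m ^ 2 * besselSeries (-m ^ 2) 1 u v)) := by
  have hexp : Tendsto (fun n : ℕ => -(A n + B n + 1 : ℝ) / 2 / n) atTop (𝓝 (-(u + v + 0) / 2)) := by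
    refine (((hA.add hB).add (tendsto_one_div_atTop_nhds_zero_nat (𝕜 := ℝ))).neg.div_const 2).congr
      fun n => ?_
    ring
  have hpref := tendsto_one_add_sq_div_sq_rpow m hexp
  have heq := (eventually_ne_atTop 0).mono fun n hn => natCast_mul_am_re_im m (A n) (B n) n hn
  constructor
  · simpa using (hpref.mul ((tendsto_chooseSeries (-m ^ 2) 0 hA hB).const_mul m)).congr'
      (heq.mono fun n h => h.1.symm)
  · simpa using (hpref.mul ((tendsto_chooseSeries (-m ^ 2) 1 hA hB).const_mul (-m ^ 2))).congr'
      (heq.mono fun n h => h.2.symm)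

/-! ### Lattice approximation -/

lemma tendsto_intFloor_mul_div (c : ℝ) :
    Tendsto (fun n : ℕ => (⌊(n : ℝ) * c⌋ : ℝ) / n) atTop (𝓝 c) := by
  have hlow : Tendsto (fun n : ℕ => c - 1 / (n : ℝ)) atTop (𝓝 c) := by
    simpa using tendsto_const_nhds.sub (tendsto_one_div_atTop_nhds_zero_nat (𝕜 := ℝ))
  refine tendsto_of_tendsto_of_tendsto_of_le_of_le' hlow tendsto_const_nhds ?_ ?_ <;>
    filter_upwards [eventually_gt_atTop 0] with n hn
  · rw [le_div_iff₀ (by positivity), sub_mul, one_div_mul_cancel (by positivity)]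
    linarith [Int.sub_one_lt_floor ((n : ℝ) * c)]
  · rw [div_le_iff₀ (by positivity), mul_comm]
    exact Int.floor_le _

lemma tendsto_toNat_div {p : ℕ → ℤ} {L : ℝ} (hL : 0 < L)
    (hp : Tendsto (fun n => (p n : ℝ) / n) atTop (𝓝 L)) :
    (∀ᶠ n in atTop, ((p n).toNat : ℤ) = p n) ∧
      Tendsto (fun n => ((p n).toNat : ℝ) / n) atTop (𝓝 L) := by
  have hnonneg : ∀ᶠ n in atTop, 0 ≤ p n := by
    filter_upwards [hp.eventually (eventually_gt_nhds hL)] with n hn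
    rcases div_pos_iff.1 hn with ⟨hpos, -⟩ | ⟨-, hneg⟩
    · exact_mod_cast hpos.le
    · exact absurd hneg (Nat.cast_nonneg n).not_gt
  refine ⟨hnonneg.mono fun n => Int.toNat_of_nonneg, hp.congr' (hnonneg.mono fun n h => ?_)⟩
  rw [← Int.toNat_of_nonneg h, Int.cast_natCast]

lemma exists_lattice_approx {x t : ℝ} (hx : |x| < t) : ∃ A B : ℕ → ℕ,
    (∀ᶠ n : ℕ in atTop, 2 * ⌊(n : ℝ) * x / 2⌋ = (A n : ℤ) - B n ∧
      2 * ⌊(n : ℝ) * t / 2⌋ = (A n : ℤ) + B n + 2) ∧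
    Tendsto (fun n => (A n : ℝ) / n) atTop (𝓝 ((t + x) / 2)) ∧
    Tendsto (fun n => (B n : ℝ) / n) atTop (𝓝 ((t - x) / 2)) := by
  obtain ⟨hxt, hxt'⟩ := abs_lt.1 hx
  set X : ℕ → ℤ := fun n => ⌊(n : ℝ) * x / 2⌋
  set T : ℕ → ℤ := fun n => ⌊(n : ℝ) * t / 2⌋
  have hfloor (c : ℝ) : Tendsto (fun n : ℕ => (⌊(n : ℝ) * c / 2⌋ : ℝ) / n) atTop (𝓝 (c / 2)) := by
    simpa only [mul_div_assoc] using tendsto_intFloor_mul_div (c / 2)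
  have hone : Tendsto (fun n : ℕ => (1 : ℝ) / n) atTop (𝓝 0) := tendsto_one_div_atTop_nhds_zero_nat
  obtain ⟨hA, hAlim⟩ := tendsto_toNat_div (p := fun n => T n + X n - 1) (L := (t + x) / 2)
    (by linarith)
    (by simpa [add_div, sub_div] using ((hfloor t).add (hfloor x)).sub hone)
  obtain ⟨hB, hBlim⟩ := tendsto_toNat_div (p := fun n => T n - X n - 1) (L := (t - x) / 2)
    (by linarith)
    (by simpa [sub_div] using ((hfloor t).sub (hfloor x)).sub hone)
  refine ⟨_, _, ?_, hAlim, hBlim⟩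
  filter_upwards [hA, hB] with n hAn hBn
  rw [hAn, hBn]
  constructor <;> ring

theorem pointwise_continuum_limit_general (m : ℝ) (x t : ℝ) (hx : |x| < t) :
    Filter.Tendsto (fun n : ℕ =>
        (n : ℝ) * (am (2 * ⌊(n : ℝ) * x / 2⌋) (2 * ⌊(n : ℝ) * t / 2⌋) m (1 / n)).re)
      Filter.atTop (nhds (m * besselJ0 (m * Real.sqrt (t ^ 2 - x ^ 2)))) ∧
    Filter.Tendsto (fun n : ℕ =>
        (n : ℝ) * (am (2 * ⌊(n : ℝ) * x / 2⌋) (2 * ⌊(n : ℝ) * t / 2⌋) m (1 / n)).im)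
      Filter.atTop
      (nhds (-m * ((x + t) / Real.sqrt (t ^ 2 - x ^ 2)) *
        besselJ1 (m * Real.sqrt (t ^ 2 - x ^ 2)))) := by
  obtain ⟨A, B, hcoord, hA, hB⟩ := exists_lattice_approx hx
  obtain ⟨hre, him⟩ := tendsto_natCast_mul_am m hA hB
  have hpos : 0 < t ^ 2 - x ^ 2 := by nlinarith [abs_lt.1 hx]
  have hz : (m * √(t ^ 2 - x ^ 2) / 2) ^ 2 = -(-m ^ 2) * ((t + x) / 2) * ((t - x) / 2) := by
    rw [div_pow, mul_pow, Real.sq_sqrt hpos.le]; ring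
  have hJ1 : -m * ((x + t) / √(t ^ 2 - x ^ 2)) * besselJ1 (m * √(t ^ 2 - x ^ 2)) =
      -m ^ 2 * besselSeries (-m ^ 2) 1 ((t + x) / 2) ((t - x) / 2) := by
    calc _ = -(2 * m / √(t ^ 2 - x ^ 2)) * ((t + x) / 2 * besselJ1 (m * √(t ^ 2 - x ^ 2))) := by
          ring
      _ = _ := by
          rw [mul_besselJ1_eq_besselSeries hz]
          field_simp [(Real.sqrt_pos.2 hpos).ne']
  rw [besselJ0_eq_besselSeries hz, hJ1]
  exact ⟨hre.congr' (hcoord.mono fun n h => by simp only [h.1, h.2]),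
    him.congr' (hcoord.mono fun n h => by simp only [h.1, h.2])⟩

/-- Pointwise continuum limit of Feynman checkers. -/
theorem pointwise_continuum_limit (m : ℝ) (hm : 0 ≤ m) (x t : ℝ) (hx : |x| < t) :
    Filter.Tendsto (fun n : ℕ =>
        (n : ℝ) * (am (2 * ⌊(n : ℝ) * x / 2⌋) (2 * ⌊(n : ℝ) * t / 2⌋) m (1 / n)).re)
      Filter.atTop (nhds (m * besselJ0 (m * Real.sqrt (t ^ 2 - x ^ 2)))) ∧
    Filter.Tendsto (fun n : ℕ =>
        (n : ℝ) * (am (2 * ⌊(n : ℝ) * x / 2⌋) (2 * ⌊(n : ℝ) * t / 2⌋) m (1 / n)).im)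
      Filter.atTop
      (nhds (-m * ((x + t) / Real.sqrt (t ^ 2 - x ^ 2)) *
        besselJ1 (m * Real.sqrt (t ^ 2 - x ^ 2)))) :=
  pointwise_continuum_limit_general m x t hx
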